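/- Let P be a nonempty poset satisfying the upper bound property and the lower bound property, K = WithBot (WithTop P), Θ a congruence on K, and E the equivalence relation on P defined by a E b iff (↑a, ↑b) ∈ Θ. For all a, b ∈ P the following hold: (1) if {a, b} has a least upper bound c in P, then { x ∈ P | (↑x, ↑a ⊔ ↑b) ∈ Θ } equals the E-class of c and is nonempty; (2) if {a, b} has no upper bound in P and the Θ-class of ⊤ is {⊤}, then no x ∈ P satisfies (↑x, ↑a ⊔ ↑b) ∈ Θ; (3) if {a, b} has no upper bound in P and the Θ-class of ⊤ is not {⊤}, then there exists α ∈ P with (↑α, ⊤) ∈ Θ, and { x ∈ P | (↑x, ↑a ⊔ ↑b) ∈ Θ } equals the E-class of α. -/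
import Mathlib


/-- A poset satisfies the upper bound property if every pair of elements having
an upper bound has a least upper bound. -/
def UBP (P : Type*) [PartialOrder P] : Prop :=
  ∀ a b : P, (∃ u, a ≤ u ∧ b ≤ u) → ∃ c, IsLUB {a, b} c

/-- A poset satisfies the lower bound property if every pair of elements having
a lower bound has a greatest lower bound. -/
def LBP (P : Type*) [PartialOrder P] : Prop :=
  ∀ a b : P, (∃ l, l ≤ a ∧ l ≤ b) → ∃ c, IsGLB {a, b} c

/-- The canonical embedding of `P` into its two-point extension `WithBot (WithTop P)`. -/
def emb {P : Type*} (a : P) : WithBot (WithTop P) := ((a : WithTop P) : WithBot (WithTop P))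

/-- A congruence on a (lattice-ordered) poset `K`: an equivalence relation compatible
with binary suprema and binary infima, expressed via `IsLUB` and `IsGLB`. -/
def IsCongruence {K : Type*} [PartialOrder K] (Θ : K → K → Prop) : Prop :=
  Equivalence Θ ∧
  (∀ a b c d sa sb : K, Θ a b → Θ c d → IsLUB {a, c} sa → IsLUB {b, d} sb → Θ sa sb) ∧
  (∀ a b c d ia ib : K, Θ a b → Θ c d → IsGLB {a, c} ia → IsGLB {b, d} ib → Θ ia ib)

lemma emb_le_emb {P : Type*} [PartialOrder P] {a b : P} : emb a ≤ emb b ↔ a ≤ b := by simp [emb]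

lemma emb_ne_top {P : Type*} [PartialOrder P] (a : P) : emb a ≠ (⊤ : WithBot (WithTop P)) := by
  intro h
  exact WithTop.coe_ne_top (WithBot.coe_injective h)

lemma lub_emb_of_lub {P : Type*} [PartialOrder P] {a b c : P} (h : IsLUB ({a, b} : Set P) c) :
    IsLUB {emb a, emb b} (emb c) := by
  constructor
  · rintro x (rfl | rfl)
    · exact emb_le_emb.2 (h.1 (by left; rfl))
    · exact emb_le_emb.2 (h.1 (by right; rfl))
  · intro u hu
    have ha : emb a ≤ u := hu (by left; rfl)
    have hb : emb b ≤ u := hu (by right; rfl)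
    rcases u with _ | (_ | y)
    · exact (WithBot.not_coe_le_bot _ ha).elim
    · exact le_top
    · have ha' : a ≤ y := by
        rw [show ((some (some y) : WithBot (WithTop P))) = emb y from rfl] at ha
        exact emb_le_emb.1 ha
      have hb' : b ≤ y := by
        rw [show ((some (some y) : WithBot (WithTop P))) = emb y from rfl] at hb
        exact emb_le_emb.1 hb
      have : c ≤ y := h.2 (by rintro z (rfl | rfl) <;> assumption)
      exact emb_le_emb.2 this

lemma lub_top_of_no_ub {P : Type*} [PartialOrder P] {a b : P} (h : ¬∃ u, a ≤ u ∧ b ≤ u) :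
    IsLUB {emb a, emb b} (⊤ : WithBot (WithTop P)) := by
  constructor
  · rintro x (rfl | rfl) <;> exact le_top
  · intro u hu
    have ha : emb a ≤ u := hu (by left; rfl)
    have hb : emb b ≤ u := hu (by right; rfl)
    rcases u with _ | (_ | y)
    · exact (WithBot.not_coe_le_bot _ ha).elim
    · exact le_refl _
    · exfalso
      apply h
      refine ⟨y, ?_, ?_⟩
      · exact emb_le_emb.1 (show emb a ≤ emb y from ha)
      · exact emb_le_emb.1 (show emb b ≤ emb y from hb)

/-- Let `P` be a nonempty poset with the upper and lower bound properties,
`K = WithBot (WithTop P)`, `Θ` a congruence on `K` and `E` the relation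
`a E b ↔ (↑a, ↑b) ∈ Θ` on `P`. For `a b : P` and `s` the supremum of `{↑a, ↑b}` in `K`:
(1) if `{a, b}` has a least upper bound `c` in `P`, then `{x | (↑x, s) ∈ Θ}` equals the
`E`-class of `c` and is nonempty; (2) if `{a, b}` has no upper bound and the `Θ`-class of
`⊤` is `{⊤}`, then no `x ∈ P` satisfies `(↑x, s) ∈ Θ`; (3) if `{a, b}` has no upper bound
and the `Θ`-class of `⊤` is not `{⊤}`, then there is `α ∈ P` with `(↑α, ⊤) ∈ Θ` and
`{x | (↑x, s) ∈ Θ}` equals the `E`-class of `α`. -/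
theorem quotient_join_description {P : Type*} [PartialOrder P] [Nonempty P]
    (hUBP : UBP P) (hLBP : LBP P)
    (Θ : WithBot (WithTop P) → WithBot (WithTop P) → Prop)
    (hΘ : IsCongruence Θ) :
    ∀ a b : P,
      (∀ c : P, IsLUB {a, b} c → ∀ s : WithBot (WithTop P), IsLUB {emb a, emb b} s →
        {x : P | Θ (emb x) s} = {x : P | Θ (emb x) (emb c)} ∧
        {x : P | Θ (emb x) s}.Nonempty) ∧
      ((¬∃ u, a ≤ u ∧ b ≤ u) → (∀ x : WithBot (WithTop P), Θ x ⊤ → x = ⊤) →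
        ∀ s : WithBot (WithTop P), IsLUB {emb a, emb b} s → ∀ x : P, ¬ Θ (emb x) s) ∧
      ((¬∃ u, a ≤ u ∧ b ≤ u) → (¬∀ x : WithBot (WithTop P), Θ x ⊤ → x = ⊤) →
        ∃ α : P, Θ (emb α) ⊤ ∧ ∀ s : WithBot (WithTop P), IsLUB {emb a, emb b} s →
          {x : P | Θ (emb x) s} = {x : P | Θ (emb x) (emb α)}) := by
  obtain ⟨hEq, hJoin, hMeet⟩ := hΘ
  intro a b
  refine ⟨?_, ?_, ?_⟩
  · intro c hc s hs
    have hse : s = emb c := hs.unique (lub_emb_of_lub hc)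
    subst hse
    exact ⟨rfl, ⟨c, hEq.refl _⟩⟩
  · intro hno htop s hs x hx
    have hse : s = ⊤ := hs.unique (lub_top_of_no_ub hno)
    subst hse
    exact emb_ne_top x (htop _ hx)
  · intro hno htop
    push_neg at htop
    obtain ⟨x, hxT, hxne⟩ := htop
    obtain ⟨α, hα⟩ : ∃ α : P, Θ (emb α) ⊤ := by
      rcases x with _ | (_ | y)
      · obtain ⟨p⟩ := ‹Nonempty P›
        refine ⟨p, hJoin _ _ _ _ _ _ hxT (hEq.refl (emb p)) ?_ ?_⟩
        · constructor
          · rintro z (rfl | rfl)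
            · exact bot_le
            · exact le_refl _
          · intro u hu
            exact hu (by right; rfl)
        · constructor
          · rintro z (rfl | rfl)
            · exact le_refl _
            · exact le_top
          · intro u hu
            exact hu (by left; rfl)
      · exact (hxne rfl).elim
      · exact ⟨y, hxT⟩
    refine ⟨α, hα, ?_⟩
    intro s hs
    have hse : s = ⊤ := hs.unique (lub_top_of_no_ub hno)
    subst hse
    ext z
    simp only [Set.mem_setOf_eq]
    exact ⟨fun hz => hEq.trans hz (hEq.symm hα), fun hz => hEq.trans hz hα⟩
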